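/- If f : Δ → ℝ is convex on the co-ordinates on Δ = [a,b]×[c,d], then f((a+b)/2,(c+d)/2) ≤ (1/2)[(1/(b-a))∫_a^b f(x,(c+d)/2) dx + (1/(d-c))∫_c^d f((a+b)/2,y) dy] ≤ (1/((b-a)(d-c)))∫_a^b∫_c^d f(x,y) dx dy ≤ (1/4)[(1/(b-a))∫_a^b f(x,c) dx + (1/(b-a))∫_a^b f(x,d) dx + (1/(d-c))∫_c^d f(a,y) dy + (1/(d-c))∫_c^d f(b,y) dy] ≤ (f(a,c)+f(a,d)+f(b,c)+f(b,d))/4. -/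

import Mathlib

/-!
For a convex `g` on `[a, b]`, the reflection `x ↦ a + b - x` preserves `∫ g`, so
`∫ g = ∫ (g x + g (a + b - x)) / 2`, and convexity squeezes the integrand pointwise between
`g ((a + b) / 2)` and `(g a + g b) / 2`: this is the one-dimensional Hermite–Hadamard inequality.
Applying it to every slice of `f` in one variable and integrating over the other variable
(Fubini on the rectangle) bounds the double integral in both directions; averaging the versions
obtained from the two variables gives the chain.
-/

open MeasureTheory intervalIntegral Set

section Interval

variable {a b : ℝ} {g : ℝ → ℝ}

namespace ConvexOn

theorem map_midpoint_le_avg_reflect (hg : ConvexOn ℝ (Icc a b) g) {x : ℝ} (hx : x ∈ Icc a b) :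
    g ((a + b) / 2) ≤ (g x + g (a + b - x)) / 2 := by
  have hx' : a + b - x ∈ Icc a b := ⟨by linarith [hx.2], by linarith [hx.1]⟩
  have h := hg.2 hx hx' (by norm_num : (0 : ℝ) ≤ 1 / 2) (by norm_num : (0 : ℝ) ≤ 1 / 2)
    (by norm_num)
  simp only [smul_eq_mul] at h
  rw [show 1 / 2 * x + 1 / 2 * (a + b - x) = (a + b) / 2 by ring] at h
  linarith

theorem add_map_reflect_le (hg : ConvexOn ℝ (Icc a b) g) {x : ℝ} (hx : x ∈ Icc a b) :
    g x + g (a + b - x) ≤ g a + g b := by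
  rcases (hx.1.trans hx.2).eq_or_lt with rfl | hab
  · obtain rfl : x = a := le_antisymm hx.2 hx.1
    simp
  have hba : b - a ≠ 0 := (sub_pos.2 hab).ne'
  obtain ⟨s, hs_def⟩ : ∃ s, s = (b - x) / (b - a) := ⟨_, rfl⟩
  obtain ⟨t, ht_def⟩ : ∃ t, t = (x - a) / (b - a) := ⟨_, rfl⟩
  have hs : 0 ≤ s := hs_def ▸ div_nonneg (by linarith [hx.2]) (by linarith)
  have ht : 0 ≤ t := ht_def ▸ div_nonneg (by linarith [hx.1]) (by linarith)
  have hst : s + t = 1 := by rw [hs_def, ht_def]; field_simp; ring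
  have ha := left_mem_Icc.2 hab.le
  have hb := right_mem_Icc.2 hab.le
  have h₁ := hg.2 ha hb hs ht hst
  have h₂ := hg.2 ha hb ht hs (by rw [add_comm, hst])
  simp only [smul_eq_mul] at h₁ h₂
  rw [show s * a + t * b = x by rw [hs_def, ht_def]; field_simp; ring] at h₁
  rw [show t * a + s * b = a + b - x by rw [hs_def, ht_def]; field_simp; ring] at h₂
  linear_combination h₁ + h₂ + (g a + g b) * hst

end ConvexOn

theorem IntervalIntegrable.comp_reflect (hg : IntervalIntegrable g volume a b) :
    IntervalIntegrable (fun x => g (a + b - x)) volume a b := by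
  simpa using (hg.comp_sub_left (a + b)).symm

theorem IntervalIntegrable.integral_add_const (hg : IntervalIntegrable g volume a b) (C : ℝ) :
    ∫ x in a..b, (g x + C) = (∫ x in a..b, g x) + (b - a) * C := by
  rw [integral_add hg intervalIntegrable_const, intervalIntegral.integral_const, smul_eq_mul]

theorem intervalIntegral.integral_eq_integral_avg_reflect (hg : IntervalIntegrable g volume a b) :
    ∫ x in a..b, g x = ∫ x in a..b, (g x + g (a + b - x)) / 2 := by
  rw [integral_div, integral_add hg hg.comp_reflect, integral_comp_sub_left g (a + b)]
  simp

namespace ConvexOn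

theorem mul_map_midpoint_le_integral (hab : a ≤ b) (hg : ConvexOn ℝ (Icc a b) g)
    (hint : IntervalIntegrable g volume a b) :
    (b - a) * g ((a + b) / 2) ≤ ∫ x in a..b, g x := by
  rw [integral_eq_integral_avg_reflect hint, ← smul_eq_mul, ← intervalIntegral.integral_const]
  exact integral_mono_on hab intervalIntegrable_const ((hint.add hint.comp_reflect).div_const 2)
    fun x hx => hg.map_midpoint_le_avg_reflect hx

theorem integral_le_mul_avg_endpoints (hab : a ≤ b) (hg : ConvexOn ℝ (Icc a b) g)
    (hint : IntervalIntegrable g volume a b) :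
    ∫ x in a..b, g x ≤ (b - a) * ((g a + g b) / 2) := by
  rw [integral_eq_integral_avg_reflect hint, ← smul_eq_mul, ← intervalIntegral.integral_const]
  exact integral_mono_on hab ((hint.add hint.comp_reflect).div_const 2) intervalIntegrable_const
    fun x hx => div_le_div_of_nonneg_right (hg.add_map_reflect_le hx) zero_le_two

end ConvexOn

end Interval

section Rectangle

variable {a b c d : ℝ} {f : ℝ → ℝ → ℝ}

theorem ContinuousOn.uncurry_swap (hf : ContinuousOn (Function.uncurry f) (Icc a b ×ˢ Icc c d)) :
    ContinuousOn (Function.uncurry (Function.swap f)) (Icc c d ×ˢ Icc a b) :=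
  hf.comp continuous_swap.continuousOn fun _ hp => ⟨hp.2, hp.1⟩

theorem ContinuousOn.intervalIntegrable_slice
    (hf : ContinuousOn (Function.uncurry f) (Icc a b ×ˢ Icc c d)) (hcd : c ≤ d)
    {x : ℝ} (hx : x ∈ Icc a b) : IntervalIntegrable (f x) volume c d :=
  (hf.comp (Continuous.prodMk_right x).continuousOn fun _ hy => ⟨hx, hy⟩).intervalIntegrable_of_Icc
    hcd

theorem ContinuousOn.integrable_prod_restrict_Ioc
    (hf : ContinuousOn (Function.uncurry f) (Icc a b ×ˢ Icc c d)) :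
    Integrable (Function.uncurry f)
      ((volume.restrict (Ioc a b)).prod (volume.restrict (Ioc c d))) := by
  rw [Measure.prod_restrict, ← Measure.volume_eq_prod]
  exact (hf.integrableOn_compact (isCompact_Icc.prod isCompact_Icc)).mono_set
    (prod_mono Ioc_subset_Icc_self Ioc_subset_Icc_self)

theorem ContinuousOn.intervalIntegrable_integral
    (hf : ContinuousOn (Function.uncurry f) (Icc a b ×ˢ Icc c d)) (hab : a ≤ b) (hcd : c ≤ d) :
    IntervalIntegrable (fun x => ∫ y in c..d, f x y) volume a b := by
  simp_rw [intervalIntegrable_iff_integrableOn_Ioc_of_le hab, integral_of_le hcd]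
  exact hf.integrable_prod_restrict_Ioc.integral_prod_left

theorem ContinuousOn.integral_integral_swap
    (hf : ContinuousOn (Function.uncurry f) (Icc a b ×ˢ Icc c d)) (hab : a ≤ b) (hcd : c ≤ d) :
    ∫ x in a..b, ∫ y in c..d, f x y = ∫ y in c..d, ∫ x in a..b, f x y := by
  simp_rw [integral_of_le hab, integral_of_le hcd]
  exact MeasureTheory.integral_integral_swap hf.integrable_prod_restrict_Ioc

theorem mul_integral_midpoint_le_integral_integral
    (hf : ContinuousOn (Function.uncurry f) (Icc a b ×ˢ Icc c d)) (hab : a ≤ b) (hcd : c ≤ d)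
    (hconv : ∀ x ∈ Icc a b, ConvexOn ℝ (Icc c d) (f x)) :
    (d - c) * ∫ x in a..b, f x ((c + d) / 2) ≤ ∫ x in a..b, ∫ y in c..d, f x y := by
  have hmid : (c + d) / 2 ∈ Icc c d := ⟨by linarith, by linarith⟩
  rw [← intervalIntegral.integral_const_mul]
  exact integral_mono_on hab ((hf.uncurry_swap.intervalIntegrable_slice hab hmid).const_mul _)
    (hf.intervalIntegrable_integral hab hcd) fun x hx =>
      (hconv x hx).mul_map_midpoint_le_integral hcd (hf.intervalIntegrable_slice hcd hx)

theorem integral_integral_le_mul_integral_avg_endpoints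
    (hf : ContinuousOn (Function.uncurry f) (Icc a b ×ˢ Icc c d)) (hab : a ≤ b) (hcd : c ≤ d)
    (hconv : ∀ x ∈ Icc a b, ConvexOn ℝ (Icc c d) (f x)) :
    ∫ x in a..b, ∫ y in c..d, f x y
      ≤ (d - c) * (((∫ x in a..b, f x c) + ∫ x in a..b, f x d) / 2) := by
  have hc := hf.uncurry_swap.intervalIntegrable_slice hab (left_mem_Icc.2 hcd)
  have hd := hf.uncurry_swap.intervalIntegrable_slice hab (right_mem_Icc.2 hcd)
  rw [← integral_add hc hd, ← intervalIntegral.integral_div, ← intervalIntegral.integral_const_mul]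
  exact integral_mono_on hab (hf.intervalIntegrable_integral hab hcd)
    (((hc.add hd).div_const 2).const_mul _) fun x hx =>
      (hconv x hx).integral_le_mul_avg_endpoints hcd (hf.intervalIntegrable_slice hcd hx)

end Rectangle

theorem stmt_19 (a b c d : ℝ) (hab : a < b) (hcd : c < d)
    (f : ℝ → ℝ → ℝ)
    (hcont : ContinuousOn (fun p : ℝ × ℝ => f p.1 p.2) (Icc a b ×ˢ Icc c d))
    (hconv1 : ∀ y ∈ Icc c d, ConvexOn ℝ (Icc a b) (fun x => f x y))
    (hconv2 : ∀ x ∈ Icc a b, ConvexOn ℝ (Icc c d) (fun y => f x y)) :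
    f ((a + b) / 2) ((c + d) / 2)
      ≤ (1 / 2) * ((1 / (b - a)) * ∫ x in a..b, f x ((c + d) / 2)
          + (1 / (d - c)) * ∫ y in c..d, f ((a + b) / 2) y) ∧
    (1 / 2) * ((1 / (b - a)) * ∫ x in a..b, f x ((c + d) / 2)
          + (1 / (d - c)) * ∫ y in c..d, f ((a + b) / 2) y)
      ≤ (1 / ((b - a) * (d - c))) * ∫ x in a..b, ∫ y in c..d, f x y ∧
    (1 / ((b - a) * (d - c))) * ∫ x in a..b, ∫ y in c..d, f x y
      ≤ (1 / 4) * ((1 / (b - a)) * ∫ x in a..b, f x c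
          + (1 / (b - a)) * ∫ x in a..b, f x d
          + (1 / (d - c)) * ∫ y in c..d, f a y
          + (1 / (d - c)) * ∫ y in c..d, f b y) ∧
    (1 / 4) * ((1 / (b - a)) * ∫ x in a..b, f x c
          + (1 / (b - a)) * ∫ x in a..b, f x d
          + (1 / (d - c)) * ∫ y in c..d, f a y
          + (1 / (d - c)) * ∫ y in c..d, f b y)
      ≤ (f a c + f a d + f b c + f b d) / 4 := by
  have hba : 0 < b - a := sub_pos.2 hab
  have hdc : 0 < d - c := sub_pos.2 hcd
  have hmidx : (a + b) / 2 ∈ Icc a b := ⟨by linarith, by linarith⟩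
  have hmidy : (c + d) / 2 ∈ Icc c d := ⟨by linarith, by linarith⟩
  have hax := left_mem_Icc.2 hab.le
  have hbx := right_mem_Icc.2 hab.le
  have hcy := left_mem_Icc.2 hcd.le
  have hdy := right_mem_Icc.2 hcd.le
  have hswap := hcont.uncurry_swap
  have hxslice {y} (hy : y ∈ Icc c d) := hswap.intervalIntegrable_slice hab.le hy
  have hyslice {x} (hx : x ∈ Icc a b) := hcont.intervalIntegrable_slice hcd.le hx
  -- `∫ x in a..b, φ x + C` parses as `∫ x in a..b, (φ x + C)`, so the statement's sums of
  -- integrals are single integrals with constant summands.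
  rw [(hxslice hmidy).integral_add_const, (hxslice hcy).integral_add_const,
    (hxslice hdy).integral_add_const, (hyslice hax).integral_add_const]
  have h₁ := (hconv1 _ hmidy).mul_map_midpoint_le_integral hab.le (hxslice hmidy)
  have h₂ := (hconv2 _ hmidx).mul_map_midpoint_le_integral hcd.le (hyslice hmidx)
  have h₃ := mul_integral_midpoint_le_integral_integral hcont hab.le hcd.le hconv2
  have h₄ := mul_integral_midpoint_le_integral_integral hswap hcd.le hab.le hconv1
  have h₅ := integral_integral_le_mul_integral_avg_endpoints hcont hab.le hcd.le hconv2
  have h₆ := integral_integral_le_mul_integral_avg_endpoints hswap hcd.le hab.le hconv1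
  have h₇ := (hconv1 _ hcy).integral_le_mul_avg_endpoints hab.le (hxslice hcy)
  have h₈ := (hconv1 _ hdy).integral_le_mul_avg_endpoints hab.le (hxslice hdy)
  have h₉ := (hconv2 _ hax).integral_le_mul_avg_endpoints hcd.le (hyslice hax)
  have h₁₀ := (hconv2 _ hbx).integral_le_mul_avg_endpoints hcd.le (hyslice hbx)
  rw [← hcont.integral_integral_swap hab.le hcd.le] at h₄ h₆
  refine ⟨?_, ?_, ?_, ?_⟩ <;> field_simp
  · linarith [mul_le_mul_of_nonneg_right h₁ hdc.le, mul_le_mul_of_nonneg_left h₂ hba.le]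
  · linarith
  · linarith
  · linarith [mul_le_mul_of_nonneg_right h₇ hdc.le, mul_le_mul_of_nonneg_right h₈ hdc.le,
      mul_le_mul_of_nonneg_left h₉ hba.le, mul_le_mul_of_nonneg_left h₁₀ hba.le]
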